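/- In the Gaussian location model, any consistent estimator sequence θ̂_n satisfying P_{n,θ}(θ̂_n = 0) → 1 for θ = 0 cannot be uniformly √n-consistent: there is no constant M such that sup_{θ∈ℝ} P_{n,θ}(√n|θ̂_n − θ| > M) → 0. -/

import Mathlib

/-!
The Gaussian densities satisfy `φ_μ² = exp (θ²) φ_{μ+θ} φ_{μ-θ}`, so by Cauchy–Schwarz every
event `A` of a sample of size `n` has
`P_{n,0}(A)² ≤ exp (n θ²) P_{n,θ}(A) P_{n,-θ}(A) ≤ exp (n θ²) P_{n,θ}(A)`,
a quantitative form of the contiguity of `P_{n,c/√n}` to `P_{n,0}`. Take `A = {θ̂_n = 0}` and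
`θ_n = (M + 1)/√n`: on `A` the estimator misses `θ_n` by `(M + 1)/√n`, so the worst-case
probability of a miss larger than `M/√n` is at least `exp (-(M + 1)²) P_{n,0}(θ̂_n = 0)²`,
which tends to `exp (-(M + 1)²) > 0`.
-/

open MeasureTheory ProbabilityTheory Filter Topology

/-- Joint law of a sample of size `n` of i.i.d. `N(θ,1)` observations. -/
noncomputable def gaussP (n : ℕ) (θ : ℝ) : Measure (Fin n → ℝ) :=
  Measure.pi fun _ => gaussianReal θ 1

open Real
open scoped ENNReal NNReal

theorem lintegral_fin_pi_prod {α : Type*} [MeasurableSpace α] {n : ℕ}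
    (μ : Fin n → Measure α) [∀ i, SigmaFinite (μ i)] {f : Fin n → α → ℝ≥0∞}
    (hf : ∀ i, Measurable (f i)) :
    ∫⁻ y, ∏ i, f i (y i) ∂Measure.pi μ = ∏ i, ∫⁻ x, f i x ∂μ i := by
  induction n with
  | zero => simp [Measure.pi_empty_univ]
  | succ n ih =>
    rw [← (measurePreserving_piFinSuccAbove μ 0).symm.lintegral_comp_emb
      (MeasurableEquiv.measurableEmbedding _)]
    simp_rw [MeasurableEquiv.piFinSuccAbove_symm_apply, Fin.insertNthEquiv,
      Fin.prod_univ_succ, Fin.insertNth_zero]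
    simp only [Fin.zero_succAbove, Equiv.coe_fn_mk, Fin.cons_zero, Fin.cons_succ, cast_eq]
    have hG : Measurable fun a : Fin n → α => ∏ i : Fin n, f i.succ (a i) :=
      Finset.measurable_prod _ fun i _ => (hf _).comp (measurable_pi_apply i)
    rw [lintegral_prod_mul (hf 0).aemeasurable hG.aemeasurable, ih _ fun i => hf _]

theorem MeasureTheory.Measure.pi_withDensity {α : Type*} [MeasurableSpace α] {n : ℕ}
    (μ : Fin n → Measure α) [∀ i, SigmaFinite (μ i)] {f : Fin n → α → ℝ≥0∞}
    [∀ i, SigmaFinite ((μ i).withDensity (f i))] (hf : ∀ i, Measurable (f i)) :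
    Measure.pi (fun i => (μ i).withDensity (f i))
      = (Measure.pi μ).withDensity fun y => ∏ i, f i (y i) := by
  refine Measure.pi_eq fun s hs => ?_
  rw [withDensity_apply _ (MeasurableSet.univ_pi hs), Measure.restrict_pi_pi,
    lintegral_fin_pi_prod _ hf]
  simp only [withDensity_apply _ (hs _)]

theorem gaussP_eq_withDensity (n : ℕ) (θ : ℝ) :
    gaussP n θ = (Measure.pi fun _ : Fin n => (volume : Measure ℝ)).withDensity
      fun y => ∏ i, gaussianPDF θ 1 (y i) := by
  have : SigmaFinite ((volume : Measure ℝ).withDensity (gaussianPDF θ 1)) := by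
    rw [← gaussianReal_of_var_ne_zero θ one_ne_zero]; infer_instance
  rw [gaussP, gaussianReal_of_var_ne_zero θ one_ne_zero,
    Measure.pi_withDensity _ fun _ => measurable_gaussianPDF θ 1]

theorem gaussianPDFReal_sq (μ θ : ℝ) (v : ℝ≥0) (x : ℝ) :
    gaussianPDFReal μ v x ^ 2
      = rexp (θ ^ 2 / v) * (gaussianPDFReal (μ + θ) v x * gaussianPDFReal (μ - θ) v x) := by
  have hexponent : θ ^ 2 / v + (-(x - (μ + θ)) ^ 2 / (2 * v) + -(x - (μ - θ)) ^ 2 / (2 * v))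
      = 2 * (-(x - μ) ^ 2 / (2 * v)) := by
    rcases eq_or_ne (v : ℝ) 0 with hv | hv
    · simp [hv]
    · field_simp; ring
  simp only [gaussianPDFReal]
  rw [mul_pow, ← Real.exp_nat_mul, Nat.cast_ofNat, ← hexponent, Real.exp_add, Real.exp_add]
  ring

theorem gaussianPDF_sq (μ θ : ℝ) (v : ℝ≥0) (x : ℝ) :
    gaussianPDF μ v x ^ 2
      = ENNReal.ofReal (rexp (θ ^ 2 / v)) *
        (gaussianPDF (μ + θ) v x * gaussianPDF (μ - θ) v x) := by
  simp only [gaussianPDF]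
  rw [← ENNReal.ofReal_pow (gaussianPDFReal_nonneg _ _ _),
    ← ENNReal.ofReal_mul (gaussianPDFReal_nonneg _ _ _),
    ← ENNReal.ofReal_mul (Real.exp_nonneg _), gaussianPDFReal_sq μ θ]

theorem lintegral_sq_le_of_sq_le_mul {α : Type*} [MeasurableSpace α] (μ : Measure α)
    {f g h : α → ℝ≥0∞} (C : ℝ≥0∞) (hg : AEMeasurable g μ) (hh : AEMeasurable h μ)
    (hfgh : ∀ x, f x ^ 2 ≤ C * (g x * h x)) :
    (∫⁻ x, f x ∂μ) ^ 2 ≤ C * ((∫⁻ x, g x ∂μ) * ∫⁻ x, h x ∂μ) := by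
  have sq_rpow (x : ℝ≥0∞) : (x ^ (2⁻¹ : ℝ)) ^ 2 = x := by
    rw [← ENNReal.rpow_two, ENNReal.rpow_inv_rpow two_ne_zero]
  have hf (x : α) : f x ≤ C ^ (2⁻¹ : ℝ) * (g x ^ (2⁻¹ : ℝ) * h x ^ (2⁻¹ : ℝ)) := by
    rw [← ENNReal.mul_rpow_of_nonneg _ _ (by norm_num),
      ← ENNReal.mul_rpow_of_nonneg _ _ (by norm_num), ENNReal.le_rpow_inv_iff two_pos,
      ENNReal.rpow_two]
    exact hfgh x
  have holder : ∫⁻ x, g x ^ (2⁻¹ : ℝ) * h x ^ (2⁻¹ : ℝ) ∂μ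
      ≤ (∫⁻ x, g x ∂μ) ^ (2⁻¹ : ℝ) * (∫⁻ x, h x ∂μ) ^ (2⁻¹ : ℝ) := by
    simpa only [Pi.mul_apply, ENNReal.rpow_inv_rpow two_ne_zero, one_div] using
      ENNReal.lintegral_mul_le_Lp_mul_Lq μ .two_two (hg.pow_const (2⁻¹ : ℝ))
        (hh.pow_const (2⁻¹ : ℝ))
  calc (∫⁻ x, f x ∂μ) ^ 2
      ≤ (C ^ (2⁻¹ : ℝ) * ∫⁻ x, g x ^ (2⁻¹ : ℝ) * h x ^ (2⁻¹ : ℝ) ∂μ) ^ 2 := by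
        rw [← lintegral_const_mul'' _
          (by fun_prop : AEMeasurable (fun x => g x ^ (2⁻¹ : ℝ) * h x ^ (2⁻¹ : ℝ)) μ)]
        gcongr with x
        exact hf x
    _ ≤ (C ^ (2⁻¹ : ℝ) * ((∫⁻ x, g x ∂μ) ^ (2⁻¹ : ℝ) * (∫⁻ x, h x ∂μ) ^ (2⁻¹ : ℝ))) ^ 2 := by
        gcongr
    _ = C * ((∫⁻ x, g x ∂μ) * ∫⁻ x, h x ∂μ) := by simp only [mul_pow, sq_rpow]

instance (n : ℕ) (θ : ℝ) : IsProbabilityMeasure (gaussP n θ) := by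
  unfold gaussP; infer_instance

theorem gaussP_sq_le (n : ℕ) (μ θ : ℝ) (A : Set (Fin n → ℝ)) :
    gaussP n μ A ^ 2
      ≤ ENNReal.ofReal (rexp (n * θ ^ 2)) * (gaussP n (μ + θ) A * gaussP n (μ - θ) A) := by
  have hmeas (τ : ℝ) : Measurable fun y : Fin n → ℝ => ∏ i, gaussianPDF τ 1 (y i) := by
    have := measurable_gaussianPDF τ 1
    fun_prop
  simp only [gaussP_eq_withDensity, withDensity_apply']
  refine lintegral_sq_le_of_sq_le_mul _ _ (hmeas _).aemeasurable (hmeas _).aemeasurable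
    fun y => le_of_eq ?_
  simp only [← Finset.prod_pow, gaussianPDF_sq μ θ, NNReal.coe_one, div_one,
    Finset.prod_mul_distrib, Finset.prod_const, Finset.card_univ, Fintype.card_fin,
    ← ENNReal.ofReal_pow (Real.exp_nonneg _), ← Real.exp_nat_mul]

theorem gaussP_zero_sq_le (n : ℕ) (θ : ℝ) (A : Set (Fin n → ℝ)) :
    gaussP n 0 A ^ 2 ≤ ENNReal.ofReal (rexp (n * θ ^ 2)) * gaussP n θ A :=
  calc gaussP n 0 A ^ 2
      ≤ ENNReal.ofReal (rexp (n * θ ^ 2)) * (gaussP n θ A * gaussP n (-θ) A) := by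
        simpa using gaussP_sq_le n 0 θ A
    _ ≤ ENNReal.ofReal (rexp (n * θ ^ 2)) * gaussP n θ A := by
        gcongr; exact mul_le_of_le_one_right' prob_le_one

theorem gaussP_estimator_eq_zero_sq_le {n : ℕ} (hn : 1 ≤ n) (est : (Fin n → ℝ) → ℝ)
    {M c : ℝ} (hMc : M < c) :
    gaussP n 0 {y | est y = 0} ^ 2 ≤ ENNReal.ofReal (rexp (c ^ 2)) *
      ⨆ θ : ℝ, gaussP n θ {y | M < Real.sqrt n * |est y - θ|} := by
  have hsqrt : 0 < Real.sqrt n := Real.sqrt_pos.mpr (by exact_mod_cast hn)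
  set θn := c / Real.sqrt n
  have hexp : (n : ℝ) * θn ^ 2 = c ^ 2 := by
    rw [div_pow, Real.sq_sqrt (by positivity)]
    field_simp
  have hmiss : {y | est y = 0} ⊆ {y | M < Real.sqrt n * |est y - θn|} := by
    intro y (hy : est y = 0)
    rw [Set.mem_ofPred_eq, hy, zero_sub, abs_neg, abs_div, abs_of_pos hsqrt,
      mul_div_cancel₀ _ hsqrt.ne']
    exact hMc.trans_le (le_abs_self c)
  calc gaussP n 0 {y | est y = 0} ^ 2
      ≤ ENNReal.ofReal (rexp (c ^ 2)) * gaussP n θn {y | est y = 0} := by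
        simpa only [hexp] using gaussP_zero_sq_le n θn {y | est y = 0}
    _ ≤ ENNReal.ofReal (rexp (c ^ 2)) *
        ⨆ θ : ℝ, gaussP n θ {y | M < Real.sqrt n * |est y - θ|} := by
        gcongr
        exact (measure_mono hmiss).trans (le_iSup (fun θ => gaussP n θ _) θn)

theorem stmt_13_general
    (est : (n : ℕ) → (Fin n → ℝ) → ℝ)
    (hsparse : Tendsto (fun n => gaussP n 0 {y | est n y = 0}) atTop (𝓝 1)) :
    ¬ ∃ M : ℝ, Tendsto (fun n : ℕ => ⨆ θ : ℝ,
        gaussP n θ {y | M < Real.sqrt n * |est n y - θ|}) atTop (𝓝 0) := by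
  rintro ⟨M, hM⟩
  have hbound : ∀ n ≥ 1, gaussP n 0 {y | est n y = 0} ^ 2
      ≤ ENNReal.ofReal (rexp ((M + 1) ^ 2)) *
        ⨆ θ : ℝ, gaussP n θ {y | M < Real.sqrt n * |est n y - θ|} :=
    fun n hn => gaussP_estimator_eq_zero_sq_le hn (est n) (lt_add_one M)
  have hlim := le_of_tendsto_of_tendsto (ENNReal.Tendsto.pow (n := 2) hsparse)
    (ENNReal.Tendsto.const_mul hM (Or.inr ENNReal.ofReal_ne_top))
    (eventually_atTop.mpr ⟨1, hbound⟩)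
  simp only [one_pow, mul_zero, nonpos_iff_eq_zero, one_ne_zero] at hlim

theorem stmt_13
    (est : (n : ℕ) → (Fin n → ℝ) → ℝ)
    (hmeas : ∀ n, Measurable (est n))
    (hconsistent : ∀ θ : ℝ, ∀ ε > (0 : ℝ),
      Tendsto (fun n => gaussP n θ {y | ε ≤ |est n y - θ|}) atTop (𝓝 0))
    (hsparse : Tendsto (fun n => gaussP n 0 {y | est n y = 0}) atTop (𝓝 1)) :
    ¬ ∃ M : ℝ, Tendsto (fun n : ℕ => ⨆ θ : ℝ,
        gaussP n θ {y | M < Real.sqrt n * |est n y - θ|}) atTop (𝓝 0) :=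
  stmt_13_general est hsparse
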